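/- Let f : ℝ^m → ℝ be a C² function and let x* be a critical point of f (∇f(x*) = 0). Assume that the function F : ℝ^{2m} → ℝ, F(x,y) := ⟨∇f(x), y⟩, satisfies the Łojasiewicz gradient inequality at every point (x*, y_0) with ‖y_0‖ = 1. Then there exist a constant C > 0, a constant 0 < μ < 1, and an open neighborhood U of x* such that for all x ∈ U and all y ∈ ℝ^m with ‖y‖ = 1: |⟨∇f(x), y⟩|^μ ≤ C(‖∇²f(x)·y‖ + ‖∇f(x)‖). -/

import Mathlib

open scoped RealInnerProductSpace
open Filter Topology

noncomputable section

/-- ℝ^m with the Euclidean inner product and norm. -/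
abbrev Euc (m : ℕ) := EuclideanSpace ℝ (Fin m)

/-- `minsp A = min_{‖e‖=1} ‖A e‖`. -/
def minsp {m : ℕ} (A : Euc m →L[ℝ] Euc m) : ℝ :=
  sInf {r : ℝ | ∃ e : Euc m, ‖e‖ = 1 ∧ r = ‖A e‖}

/-- The Hessian `∇²f(x)` of `f` at `x`, as a continuous linear map
(the derivative of the gradient). -/
def hessOp {m : ℕ} (f : Euc m → ℝ) (x : Euc m) : Euc m →L[ℝ] Euc m :=
  fderiv ℝ (gradient f) x

/-- `g` satisfies the Łojasiewicz gradient inequality at `z`: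
there are an open neighbourhood `U` of `z` and constants `C > 0`, `0 < μ < 1` with
`|g x − g y|^μ ≤ C ‖∇g(x)‖` for all `x, y ∈ U`. -/
def LojAt {F : Type*} [NormedAddCommGroup F] [InnerProductSpace ℝ F] [CompleteSpace F]
    (g : F → ℝ) (z : F) : Prop :=
  ∃ U : Set F, IsOpen U ∧ z ∈ U ∧ ∃ C : ℝ, 0 < C ∧ ∃ μ : ℝ, 0 < μ ∧ μ < 1 ∧
    ∀ x ∈ U, ∀ y ∈ U, |g x - g y| ^ μ ≤ C * ‖gradient g x‖

/-- `∇f` satisfies the Łojasiewicz gradient inequality at `z`: the function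
`F(x,y) = ⟨∇f(x), y⟩` on `ℝ^{2m}` satisfies the Łojasiewicz gradient inequality at
every point `(z, y)` with `‖y‖ = 1`. -/
def GradLojAt {m : ℕ} (f : Euc m → ℝ) (z : Euc m) : Prop :=
  ∀ y : Euc m, ‖y‖ = 1 →
    LojAt (fun p : WithLp 2 (Euc m × Euc m) =>
        ⟪gradient f (WithLp.equiv 2 (Euc m × Euc m) p).1,
          (WithLp.equiv 2 (Euc m × Euc m) p).2⟫)
      ((WithLp.equiv 2 (Euc m × Euc m)).symm (z, y))

lemma grad_contDiff {m : ℕ} {f : Euc m → ℝ} (hf : ContDiff ℝ 2 f) :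
    ContDiff ℝ 1 (gradient f) := by
  have h1 : ContDiff ℝ 1 (fderiv ℝ f) := hf.fderiv_right (by norm_num)
  exact ((InnerProductSpace.toDual ℝ (Euc m)).symm.toLinearIsometry.contDiff).comp h1

lemma grad_inner_eq {m : ℕ} (f : Euc m → ℝ) (y v : Euc m) :
    ⟪gradient f y, v⟫ = fderiv ℝ f y v := by
  rw [gradient, InnerProductSpace.toDual_symm_apply]

lemma hess_symm {m : ℕ} {f : Euc m → ℝ} (hf : ContDiff ℝ 2 f) (x u v : Euc m) :
    ⟪hessOp f x u, v⟫ = ⟪hessOp f x v, u⟫ := by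
  have hsymm : IsSymmSndFDerivAt ℝ f x := hf.contDiffAt.isSymmSndFDerivAt (by simp)
  have hd : DifferentiableAt ℝ (fderiv ℝ f) x :=
    ((hf.fderiv_right (m := 1) (by norm_num)).differentiable one_ne_zero).differentiableAt
  have hgd : DifferentiableAt ℝ (gradient f) x :=
    ((grad_contDiff hf).differentiable one_ne_zero).differentiableAt
  have hkey : ∀ w z : Euc m, ⟪w, hessOp f x z⟫ = fderiv ℝ (fderiv ℝ f) x z w := by
    intro w z
    have h1 : HasFDerivAt (fun y => fderiv ℝ f y w)
        ((ContinuousLinearMap.apply ℝ ℝ w).comp (fderiv ℝ (fderiv ℝ f) x)) x :=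
      ((ContinuousLinearMap.apply ℝ ℝ w).hasFDerivAt).comp x hd.hasFDerivAt
    have h2 : HasFDerivAt (fun y => fderiv ℝ f y w)
        ((innerSL ℝ w).comp (hessOp f x)) x := by
      have := ((innerSL ℝ w).hasFDerivAt).comp x hgd.hasFDerivAt
      apply this.congr_of_eventuallyEq
      filter_upwards with y
      simp only [Function.comp_apply, innerSL_apply_apply]
      rw [real_inner_comm, grad_inner_eq]
    have := h2.unique h1
    calc ⟪w, hessOp f x z⟫ = ((innerSL ℝ w).comp (hessOp f x)) z := rfl
      _ = fderiv ℝ (fderiv ℝ f) x z w := by rw [this]; rfl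
  have e1 := hkey v u
  have e2 := hkey u v
  rw [real_inner_comm] at e1 e2
  rw [e1, e2, hsymm u v]

section G
variable {m : ℕ}

abbrev PP (m : ℕ) := WithLp 2 (Euc m × Euc m)

def GG (f : Euc m → ℝ) : PP m → ℝ := fun p =>
  ⟪gradient f (WithLp.equiv 2 (Euc m × Euc m) p).1, (WithLp.equiv 2 (Euc m × Euc m) p).2⟫

def L1 (m : ℕ) : PP m →L[ℝ] Euc m :=
  (ContinuousLinearMap.fst ℝ (Euc m) (Euc m)).comp
    (WithLp.prodContinuousLinearEquiv 2 ℝ (Euc m) (Euc m) : PP m →L[ℝ] Euc m × Euc m)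

def L2 (m : ℕ) : PP m →L[ℝ] Euc m :=
  (ContinuousLinearMap.snd ℝ (Euc m) (Euc m)).comp
    (WithLp.prodContinuousLinearEquiv 2 ℝ (Euc m) (Euc m) : PP m →L[ℝ] Euc m × Euc m)

lemma hasGradientAt_GG {f : Euc m → ℝ} (hf : ContDiff ℝ 2 f) (p : PP m) :
    HasGradientAt (GG f)
      ((WithLp.equiv 2 (Euc m × Euc m)).symm
        (hessOp f (WithLp.equiv 2 (Euc m × Euc m) p).1 (WithLp.equiv 2 (Euc m × Euc m) p).2,
         gradient f (WithLp.equiv 2 (Euc m × Euc m) p).1)) p := by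
  set x := (WithLp.equiv 2 (Euc m × Euc m) p).1
  set y := (WithLp.equiv 2 (Euc m × Euc m) p).2
  have hgd : DifferentiableAt ℝ (gradient f) x :=
    ((grad_contDiff hf).differentiable one_ne_zero).differentiableAt
  have h1 : HasFDerivAt (fun q : PP m => gradient f (L1 m q))
      ((hessOp f x).comp (L1 m)) p :=
    HasFDerivAt.comp (f := L1 m) p (hgd.hasFDerivAt) (L1 m).hasFDerivAt
  have h2 : HasFDerivAt (fun q : PP m => L2 m q) (L2 m) p := (L2 m).hasFDerivAt
  have hD := h1.inner ℝ h2
  rw [hasGradientAt_iff_hasFDerivAt]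
  refine hD.congr_fderiv (Eq.symm ?_)
  apply ContinuousLinearMap.ext
  intro w
  rw [InnerProductSpace.toDual_apply_apply, WithLp.prod_inner_apply]
  simp only [ContinuousLinearMap.comp_apply, fderivInnerCLM_apply,
    ContinuousLinearMap.prod_apply]
  have hsym := hess_symm hf x y (L1 m w)
  simp only [WithLp.equiv_symm_apply, WithLp.ofLp_toLp]
  show ⟪hessOp f x y, L1 m w⟫ + ⟪gradient f x, L2 m w⟫ =
    ⟪gradient f (L1 m p), L2 m w⟫ + ⟪hessOp f x (L1 m w), L2 m p⟫
  rw [hsym]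
  have : L1 m p = x := rfl
  have h2' : L2 m p = y := rfl
  rw [this, h2']
  ring

lemma gradGG_norm_le {f : Euc m → ℝ} (hf : ContDiff ℝ 2 f) (p : PP m) :
    ‖gradient (GG f) p‖ ≤
      ‖hessOp f (WithLp.equiv 2 (Euc m × Euc m) p).1 (WithLp.equiv 2 (Euc m × Euc m) p).2‖
      + ‖gradient f (WithLp.equiv 2 (Euc m × Euc m) p).1‖ := by
  rw [(hasGradientAt_GG hf p).gradient]
  set a := hessOp f (WithLp.equiv 2 (Euc m × Euc m) p).1 (WithLp.equiv 2 (Euc m × Euc m) p).2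
  set b := gradient f (WithLp.equiv 2 (Euc m × Euc m) p).1
  have hsq : ‖(WithLp.equiv 2 (Euc m × Euc m)).symm (a, b)‖ ^ 2 = ‖a‖ ^ 2 + ‖b‖ ^ 2 := by
    rw [WithLp.prod_norm_sq_eq_of_L2]
    rfl
  nlinarith [norm_nonneg ((WithLp.equiv 2 (Euc m × Euc m)).symm (a, b)), norm_nonneg a,
    norm_nonneg b]

lemma continuous_GG {f : Euc m → ℝ} (hf : ContDiff ℝ 2 f) : Continuous (GG f) := by
  have : ∀ p : PP m, DifferentiableAt ℝ (GG f) p := fun p =>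
    (hasGradientAt_GG hf p).differentiableAt
  haveI hcs : ContinuousSMul ℝ (PP m) := IsBoundedSMul.continuousSMul
  exact continuous_iff_continuousAt.2 fun p => (this p).continuousAt
end G

/-- If `f` is `C²`, `x*` is a critical point of `f`, and `F(x,y) = ⟨∇f(x), y⟩` satisfies the
Łojasiewicz gradient inequality at every point `(x*, y₀)` with `‖y₀‖ = 1`, then there are
`C > 0`, `0 < μ < 1` and an open neighbourhood `U` of `x*` such that
`|⟨∇f(x), y⟩|^μ ≤ C(‖∇²f(x)·y‖ + ‖∇f(x)‖)` for all `x ∈ U` and all unit vectors `y`. -/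
theorem stmt17 {m : ℕ} (hm : 1 ≤ m) (f : Euc m → ℝ) (hf : ContDiff ℝ 2 f)
    (xs : Euc m) (hcrit : gradient f xs = 0)
    (hloj : GradLojAt f xs) :
    ∃ C : ℝ, 0 < C ∧ ∃ μ : ℝ, 0 < μ ∧ μ < 1 ∧ ∃ U : Set (Euc m), IsOpen U ∧ xs ∈ U ∧
      ∀ x ∈ U, ∀ y : Euc m, ‖y‖ = 1 →
        |⟪gradient f x, y⟫| ^ μ ≤ C * (‖hessOp f x y‖ + ‖gradient f x‖) := by
  classical
  set S : Set (Euc m) := Metric.sphere (0 : Euc m) 1 with hS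
  have hGcont := continuous_GG (m := m) hf
  have hlam : (fun p : WithLp 2 (Euc m × Euc m) =>
      ⟪gradient f (WithLp.equiv 2 (Euc m × Euc m) p).1,
        (WithLp.equiv 2 (Euc m × Euc m) p).2⟫) = GG f := rfl
  have key : ∀ y₀ ∈ S, ∃ V W : Set (Euc m), ∃ C μ : ℝ,
      IsOpen V ∧ IsOpen W ∧ xs ∈ V ∧ y₀ ∈ W ∧ 0 < C ∧ 0 < μ ∧ μ < 1 ∧
      ∀ x ∈ V, ∀ y ∈ W, |GG f ((WithLp.equiv 2 (Euc m × Euc m)).symm (x, y))| ≤ 1 ∧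
        |GG f ((WithLp.equiv 2 (Euc m × Euc m)).symm (x, y))| ^ μ ≤
          C * ‖gradient (GG f) ((WithLp.equiv 2 (Euc m × Euc m)).symm (x, y))‖ := by
    intro y₀ hy₀
    have hy₀n : ‖y₀‖ = 1 := by simpa [hS] using hy₀
    obtain ⟨U₀, hU₀o, hzU₀, C, hC, μ, hμ0, hμ1, hle⟩ := hloj y₀ hy₀n
    rw [hlam] at hle
    set U₁ : Set (PP m) := U₀ ∩ (GG f) ⁻¹' (Set.Ioo (-1) 1) with hU₁
    have hU₁o : IsOpen U₁ := hU₀o.inter (isOpen_Ioo.preimage hGcont)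
    have hz0 : GG f ((WithLp.equiv 2 (Euc m × Euc m)).symm (xs, y₀)) = 0 := by
      simp [GG, hcrit]
    have hzU₁ : (WithLp.equiv 2 (Euc m × Euc m)).symm (xs, y₀) ∈ U₁ :=
      ⟨hzU₀, by show GG f _ ∈ Set.Ioo (-1) 1; rw [hz0]; norm_num⟩
    have hcont : Continuous fun q : Euc m × Euc m =>
        (WithLp.equiv 2 (Euc m × Euc m)).symm q :=
      (WithLp.prodContinuousLinearEquiv 2 ℝ (Euc m) (Euc m)).symm.continuous
    have hU₂o : IsOpen ((fun q : Euc m × Euc m =>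
        (WithLp.equiv 2 (Euc m × Euc m)).symm q) ⁻¹' U₁) := hU₁o.preimage hcont
    obtain ⟨V, W, hVo, hWo, hxsV, hy₀W, hVW⟩ := isOpen_prod_iff.1 hU₂o xs y₀ hzU₁
    refine ⟨V, W, C, μ, hVo, hWo, hxsV, hy₀W, hC, hμ0, hμ1, ?_⟩
    intro x hx y hy
    have hmem : (WithLp.equiv 2 (Euc m × Euc m)).symm (x, y) ∈ U₁ :=
      hVW (Set.mk_mem_prod hx hy)
    refine ⟨?_, ?_⟩
    · have h2 := hmem.2
      simp only [Set.mem_preimage, Set.mem_Ioo] at h2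
      exact abs_le.mpr ⟨le_of_lt h2.1, le_of_lt h2.2⟩
    · have h := hle _ hmem.1 _ hzU₁.1
      rw [hz0, sub_zero] at h; exact h
  choose V W Cf μf hVo hWo hxsV hyW hCpos hμ0 hμ1 hkey using key
  have hScpt : IsCompact S := isCompact_sphere 0 1
  obtain ⟨t, hts⟩ := hScpt.elim_nhds_subcover' (fun y₀ hy₀ => W y₀ hy₀)
      (fun y₀ hy₀ => (hWo y₀ hy₀).mem_nhds (hyW y₀ hy₀))
  have hy1 : (EuclideanSpace.single (⟨0, hm⟩ : Fin m) (1:ℝ)) ∈ S := by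
    simp [hS, EuclideanSpace.norm_single]
  have ht : t.Nonempty := by
    rcases Set.mem_iUnion₂.1 (hts hy1) with ⟨i, hi, _⟩
    exact ⟨i, hi⟩
  set C : ℝ := t.sup' ht (fun i => Cf i.1 i.2) with hC
  set μ : ℝ := t.sup' ht (fun i => μf i.1 i.2) with hμ
  have hC0 : 0 < C := by
    obtain ⟨i, hi⟩ := ht
    exact lt_of_lt_of_le (hCpos i.1 i.2) (Finset.le_sup' (fun i => Cf i.1 i.2) hi)
  have hμ0' : 0 < μ := by
    obtain ⟨i, hi⟩ := ht
    exact lt_of_lt_of_le (hμ0 i.1 i.2) (Finset.le_sup' (fun i => μf i.1 i.2) hi)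
  have hμ1' : μ < 1 := by
    rw [hμ, Finset.sup'_lt_iff]
    exact fun i hi => hμ1 i.1 i.2
  refine ⟨C, hC0, μ, hμ0', hμ1', ⋂ i ∈ t, V i.1 i.2, ?_, ?_, ?_⟩
  · exact isOpen_biInter_finset fun i hi => hVo i.1 i.2
  · exact Set.mem_iInter₂.2 fun i hi => hxsV i.1 i.2
  · intro x hx y hy
    have hyS : y ∈ S := by simp [hS, hy]
    rcases Set.mem_iUnion₂.1 (hts hyS) with ⟨i, hit, hiW⟩
    have hxV : x ∈ V i.1 i.2 := Set.mem_iInter₂.1 hx i hit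
    obtain ⟨hle1, hle2⟩ := hkey i.1 i.2 x hxV y hiW
    have hGxy : GG f ((WithLp.equiv 2 (Euc m × Euc m)).symm (x, y)) = ⟪gradient f x, y⟫ := by
      simp [GG]
    rw [hGxy] at hle1 hle2
    have hgnorm := gradGG_norm_le hf ((WithLp.equiv 2 (Euc m × Euc m)).symm (x, y))
    simp only [Equiv.apply_symm_apply] at hgnorm
    have habs : |⟪gradient f x, y⟫| ^ μ ≤ |⟪gradient f x, y⟫| ^ μf i.1 i.2 := by
      rcases eq_or_lt_of_le (abs_nonneg (⟪gradient f x, y⟫ : ℝ)) with h0 | h0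
      · rw [← h0, Real.zero_rpow (ne_of_gt hμ0'), Real.zero_rpow (ne_of_gt (hμ0 i.1 i.2))]
      · exact Real.rpow_le_rpow_of_exponent_ge h0 hle1 (Finset.le_sup' (fun i => μf i.1 i.2) hit)
    calc |⟪gradient f x, y⟫| ^ μ ≤ |⟪gradient f x, y⟫| ^ μf i.1 i.2 := habs
      _ ≤ Cf i.1 i.2 * ‖gradient (GG f) ((WithLp.equiv 2 (Euc m × Euc m)).symm (x, y))‖ := hle2
      _ ≤ C * ‖gradient (GG f) ((WithLp.equiv 2 (Euc m × Euc m)).symm (x, y))‖ := by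
          exact mul_le_mul_of_nonneg_right (Finset.le_sup' (fun i => Cf i.1 i.2) hit) (norm_nonneg _)
      _ ≤ C * (‖hessOp f x y‖ + ‖gradient f x‖) :=
          mul_le_mul_of_nonneg_left hgnorm (le_of_lt hC0)
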